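/- Let (X_{I,m})_{(I,m)∈2^ℤ×ℕ} be iid complex random variables with finite variance, zero mean, and P(X_{I,m} = 0) < 1. Let u₀ ∈ L²_G with u₀ ∉ H^ε_G for every ε > 0, and let u₀^ω = Σ X_{I,m}(ω) u_{I,m} be its randomization. Then almost surely u₀^ω ∈ L²_G and u₀^ω ∉ H^ε_G for every ε > 0. -/

import Mathlib

/-!
Summability of `∑ ‖X_p‖² a_p` holds almost surely because its expectation is
`E ‖X‖² · ∑ a_p < ∞`. For the divergence, fix `t > 0` with `δ = P(‖X_p‖² ≥ t) > 0` and a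
non-summable weight `b ≥ 0`. By independence the Laplace transform of a finite partial sum
factors:
`E exp(-∑_{p∈s} b_p ‖X_p‖²) ≤ ∏_{p∈s} (1 - δ (1 - e^{-t b_p})) ≤ exp(-δ ∑_{p∈s} (1 - e^{-t b_p}))`,
and the last exponent tends to `-∞` since `1 - e^{-x}` is comparable to `x` for small `x`.
By Chernoff's bound the partial sums stay bounded only on a null set. Applying this to
`b = blockWeight ^ (1/(k+1)) · a` for every `k` covers all `ε > 0` by monotonicity in `ε`.
-/

open Real MeasureTheory ProbabilityTheory

/-- The Sobolev weight `1 + (2m+1)·2^I` of the block indexed by `(I, m) ∈ ℤ × ℕ`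
(dyadic frequency `2^I`, Hermite mode `m`). -/
noncomputable def blockWeight (p : ℤ × ℕ) : ℝ :=
  1 + (2 * (p.2 : ℝ) + 1) * (2 : ℝ) ^ p.1

open Finset Filter Topology
open scoped ENNReal

lemma one_le_blockWeight (p : ℤ × ℕ) : 1 ≤ blockWeight p := by
  unfold blockWeight
  have : 0 < (2 : ℝ) ^ p.1 := zpow_pos two_pos _
  nlinarith [(Nat.cast_nonneg p.2 : (0 : ℝ) ≤ p.2)]

section

variable {ι : Type*}

lemma not_summable_one_sub_exp_neg {b : ι → ℝ} (hb : 0 ≤ b) (hbdiv : ¬ Summable b) :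
    ¬ Summable fun i => 1 - exp (-b i) := by
  intro hc
  refine hbdiv (Summable.of_norm_bounded_eventually (hc.mul_left 2) ?_)
  filter_upwards [hc.tendsto_cofinite_zero.eventually (ge_mem_nhds one_half_pos)] with i hi
  -- `b ≤ (1 - e^{-b}) (1 + b)` and `1 - e^{-b} ≤ 1/2` give `b ≤ 2 (1 - e^{-b})`
  have hexp : exp (-b i) * (1 + b i) ≤ 1 := by
    calc exp (-b i) * (1 + b i) ≤ exp (-b i) * exp (b i) := by
          gcongr; linarith [add_one_le_exp (b i)]
      _ = 1 := by rw [← exp_add, neg_add_cancel, exp_zero]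
  rw [norm_of_nonneg (hb i)]
  nlinarith [mul_nonneg (sub_nonneg.2 hi) (hb i)]

lemma tendsto_sum_atTop_of_not_summable {c : ι → ℝ} (hc : 0 ≤ c) (hcdiv : ¬ Summable c) :
    Tendsto (fun s : Finset ι => ∑ i ∈ s, c i) atTop atTop :=
  tendsto_atTop_atTop_of_monotone (sum_mono_set_of_nonneg hc) fun M => by
    by_contra! h
    exact hcdiv (summable_of_sum_le hc fun s => (h s).le)

lemma not_summable_rpow_mul_of_forall_nat {w f : ι → ℝ} (hw : ∀ i, 1 ≤ w i) (hf : 0 ≤ f)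
    (h : ∀ k : ℕ, ¬ Summable fun i => w i ^ (1 / (k + 1 : ℝ)) * f i) {ε : ℝ} (hε : 0 < ε) :
    ¬ Summable fun i => w i ^ ε * f i := by
  obtain ⟨k, hk⟩ := exists_nat_one_div_lt hε
  refine fun hs => h k (hs.of_nonneg_of_le (fun i => ?_) fun i => ?_)
  · exact mul_nonneg (rpow_nonneg (zero_le_one.trans (hw i)) _) (hf i)
  · exact mul_le_mul_of_nonneg_right (rpow_le_rpow_of_exponent_le (hw i) hk.le) (hf i)

end

section

variable {Ω ι : Type*} [MeasurableSpace Ω] {P : Measure Ω}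

lemma exists_pos_measure_le_of_measure_pos {f : Ω → ℝ} (h : 0 < P {ω | 0 < f ω}) :
    ∃ t > 0, 0 < P {ω | t ≤ f ω} := by
  have hcover : {ω | 0 < f ω} ⊆ ⋃ n : ℕ, {ω | 1 / (n + 1 : ℝ) ≤ f ω} := fun ω hω =>
    Set.mem_iUnion.2 ((exists_nat_one_div_lt hω.out).imp fun _ hn => hn.le)
  obtain ⟨n, hn⟩ :=
    exists_measure_pos_of_not_measure_iUnion_null (h.trans_le (measure_mono hcover)).ne'
  exact ⟨_, Nat.one_div_pos_of_nat, hn⟩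

theorem ae_summable_mul_of_eLpNorm_le [Countable ι] {Y : ι → Ω → ℝ}
    (hY : ∀ i, AEStronglyMeasurable (Y i) P) {C : ℝ≥0∞} (hC : C ≠ ∞)
    (hYC : ∀ i, eLpNorm (Y i) 1 P ≤ C) {a : ι → ℝ} (ha : Summable a) :
    ∀ᵐ ω ∂P, Summable fun i => Y i ω * a i := by
  have hsum : ∑' i, eLpNorm (a i • Y i) 1 P ≠ ∞ := by
    refine ne_top_of_le_ne_top (b := ∑' i, ‖a i‖ₑ * C) ?_ (ENNReal.tsum_le_tsum fun i => ?_)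
    · rw [ENNReal.tsum_mul_right]
      exact ENNReal.mul_ne_top (tsum_enorm_ne_top_iff_summable_norm.2 ha.norm) hC
    · rw [eLpNorm_const_smul]
      gcongr
      exact hYC i
  filter_upwards [summable_norm_of_tsum_eLpNorm_ne_top le_rfl (fun i => (hY i).const_smul _) hsum]
    with ω hω
  simpa [mul_comm] using hω.of_norm

lemma mgf_neg_one_le_one_sub_measureReal_mul [IsProbabilityMeasure P] {Z : Ω → ℝ}
    (hnn : ∀ ω, 0 ≤ Z ω) {A : Set Ω} (hA : MeasurableSet A) {s : ℝ} (hZA : ∀ ω ∈ A, s ≤ Z ω) :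
    mgf Z P (-1) ≤ 1 - P.real A * (1 - exp (-s)) := by
  have hle : ∀ ω, exp (-1 * Z ω) ≤ 1 - (1 - exp (-s)) * A.indicator 1 ω := by
    intro ω
    by_cases hω : ω ∈ A
    · simpa [hω] using hZA ω hω
    · simpa [hω] using hnn ω
  calc mgf Z P (-1) ≤ ∫ ω, (1 - (1 - exp (-s)) * A.indicator 1 ω) ∂P :=
        integral_mono_of_nonneg (ae_of_all _ fun ω => (exp_pos _).le)
          ((integrable_const 1).sub ((integrable_const 1).indicator hA |>.const_mul _))
          (ae_of_all _ hle)
    _ = 1 - P.real A * (1 - exp (-s)) := by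
        rw [integral_sub (integrable_const 1) ((integrable_const 1).indicator hA |>.const_mul _),
          integral_const_mul, integral_indicator_one hA]
        simp [mul_comm]

lemma mgf_sum_neg_one_le_exp {Z : ι → Ω → ℝ} (hZ : ∀ i, Measurable (Z i))
    (hindep : iIndepFun Z P) {c : ι → ℝ} (hc : ∀ i, mgf (Z i) P (-1) ≤ 1 - c i)
    (s : Finset ι) : mgf (∑ i ∈ s, Z i) P (-1) ≤ exp (-∑ i ∈ s, c i) := by
  rw [hindep.mgf_sum hZ, ← sum_neg_distrib, exp_sum]
  exact prod_le_prod (fun i _ => mgf_nonneg) fun i _ =>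
    (hc i).trans (by linarith [add_one_le_exp (-c i)])

theorem ae_not_summable_of_mgf_neg_one_le [IsProbabilityMeasure P] {Z : ι → Ω → ℝ}
    (hZ : ∀ i, Measurable (Z i)) (hnn : ∀ i ω, 0 ≤ Z i ω) (hindep : iIndepFun Z P)
    {c : ι → ℝ} (hc0 : 0 ≤ c) (hcdiv : ¬ Summable c) (hc : ∀ i, mgf (Z i) P (-1) ≤ 1 - c i) :
    ∀ᵐ ω ∂P, ¬ Summable fun i => Z i ω := by
  set A : ℕ → Set Ω := fun k => ⋂ s : Finset ι, {ω | (∑ i ∈ s, Z i) ω ≤ k}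
  have hsub : {ω | ¬¬ Summable fun i => Z i ω} ⊆ ⋃ k, A k := by
    intro ω hω
    obtain ⟨k, hk⟩ := exists_nat_ge (∑' i, Z i ω)
    refine Set.mem_iUnion.2 ⟨k, Set.mem_iInter.2 fun s => ?_⟩
    simpa [Finset.sum_apply] using
      ((not_not.1 hω).sum_le_tsum s fun i _ => hnn i ω).trans hk
  have hA : ∀ k, P (A k) = 0 := by
    intro k
    have hbound (s : Finset ι) : P.real (A k) ≤ exp k * exp (-∑ i ∈ s, c i) := by
      have hint : Integrable (fun ω => exp (-1 * (∑ i ∈ s, Z i) ω)) P := by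
        refine .of_bound (by fun_prop) 1 (ae_of_all _ fun ω => ?_)
        rw [norm_of_nonneg (exp_pos _).le, exp_le_one_iff, Finset.sum_apply]
        linarith [sum_nonneg fun i (_ : i ∈ s) => hnn i ω]
      calc P.real (A k) ≤ P.real {ω | (∑ i ∈ s, Z i) ω ≤ k} :=
            measureReal_mono (Set.iInter_subset _ s)
        _ ≤ exp (- -1 * k) * mgf (∑ i ∈ s, Z i) P (-1) :=
            measure_le_le_exp_mul_mgf _ (by norm_num) hint
        _ ≤ exp k * exp (-∑ i ∈ s, c i) := by
            rw [neg_neg, one_mul]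
            gcongr
            exact mgf_sum_neg_one_le_exp hZ hindep hc s
    have hlim : Tendsto (fun s : Finset ι => exp k * exp (-∑ i ∈ s, c i)) atTop (𝓝 0) := by
      simpa using (tendsto_exp_atBot.comp (tendsto_neg_atTop_atBot.comp
        (tendsto_sum_atTop_of_not_summable hc0 hcdiv))).const_mul (exp k)
    exact (measureReal_eq_zero_iff).1 (le_antisymm (ge_of_tendsto' hlim hbound) measureReal_nonneg)
  exact ae_iff.2 (measure_mono_null hsub (measure_iUnion_null hA))

theorem ae_not_summable_mul_of_iIndepFun [IsProbabilityMeasure P] {Y : ι → Ω → ℝ}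
    (hY : ∀ i, Measurable (Y i)) (hnn : ∀ i ω, 0 ≤ Y i ω) (hindep : iIndepFun Y P)
    {t δ : ℝ} (ht : 0 < t) (hδ : 0 < δ) (hδY : ∀ i, δ ≤ P.real {ω | t ≤ Y i ω})
    {b : ι → ℝ} (hb : 0 ≤ b) (hbdiv : ¬ Summable b) :
    ∀ᵐ ω ∂P, ¬ Summable fun i => b i * Y i ω := by
  have htb : 0 ≤ fun i => t * b i := fun i => mul_nonneg ht.le (hb i)
  have hexp (i : ι) : 0 ≤ 1 - exp (-(t * b i)) := by
    simpa using exp_le_one_iff.2 (neg_nonpos.2 (htb i))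
  refine ae_not_summable_of_mgf_neg_one_le (fun i => (hY i).const_mul (b i))
    (fun i ω => mul_nonneg (hb i) (hnn i ω)) (hindep.comp _ fun i => measurable_const_mul (b i))
    (c := fun i => δ * (1 - exp (-(t * b i)))) (fun i => mul_nonneg hδ.le (hexp i)) ?_ fun i => ?_
  · rw [summable_mul_left_iff hδ.ne']
    exact not_summable_one_sub_exp_neg htb ((summable_mul_left_iff ht.ne').not.2 hbdiv)
  · calc mgf (fun ω => b i * Y i ω) P (-1)
        ≤ 1 - P.real {ω | t ≤ Y i ω} * (1 - exp (-(t * b i))) :=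
          mgf_neg_one_le_one_sub_measureReal_mul (fun ω => mul_nonneg (hb i) (hnn i ω))
            (measurableSet_le measurable_const (hY i))
            fun ω hω => by simpa [mul_comm] using mul_le_mul_of_nonneg_left hω.out (hb i)
      _ ≤ 1 - δ * (1 - exp (-(t * b i))) := by gcongr; exacts [hexp i, hδY i]

end

theorem randomization_non_smoothing_general
    {Ω : Type*} [MeasurableSpace Ω] (P : Measure Ω) [IsProbabilityMeasure P]
    (X : ℤ × ℕ → Ω → ℂ) (hmeas : ∀ p, Measurable (X p))
    (hindep : iIndepFun X P)
    (hident : ∀ p q, IdentDistrib (X p) (X q) P P)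
    (hL2 : ∀ p, MemLp (X p) 2 P)
    (hnondeg : ∀ p, P {ω | X p ω = 0} < 1)
    (a : ℤ × ℕ → ℝ) (ha : ∀ p, 0 ≤ a p)
    (haL2 : Summable a)
    (haRough : ∀ ε : ℝ, 0 < ε → ¬ Summable (fun p => blockWeight p ^ ε * a p)) :
    ∀ᵐ ω ∂P, (Summable fun p => ‖X p ω‖ ^ 2 * a p) ∧
      ∀ ε : ℝ, 0 < ε → ¬ Summable (fun p => blockWeight p ^ ε * (‖X p ω‖ ^ 2 * a p)) := by
  set Y : ℤ × ℕ → Ω → ℝ := fun p ω => ‖X p ω‖ ^ 2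
  have hY : ∀ p, Measurable (Y p) := fun p => (hmeas p).norm.pow_const 2
  have hYident (p q) : IdentDistrib (Y p) (Y q) P P :=
    (hident p q).comp (measurable_norm.pow_const 2)
  have hsummable : ∀ᵐ ω ∂P, Summable fun p => Y p ω * a p :=
    ae_summable_mul_of_eLpNorm_le (fun p => (hY p).aestronglyMeasurable)
      (memLp_one_iff_integrable.2 ((hL2 0).integrable_norm_pow two_ne_zero)).eLpNorm_ne_top
      (fun p => ((hYident p 0).eLpNorm_eq 1).le) haL2
  obtain ⟨t, ht, hδ⟩ : ∃ t > 0, 0 < P {ω | t ≤ Y 0 ω} := by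
    refine exists_pos_measure_le_of_measure_pos ?_
    have hY0 : {ω | 0 < Y 0 ω} = {ω | X 0 ω = 0}ᶜ := by ext; simp [Y, sq_pos_iff]
    rw [hY0, prob_compl_eq_one_sub (measurableSet_eq_fun (hmeas 0) measurable_const)]
    exact tsub_pos_of_lt (hnondeg 0)
  have hrough : ∀ᵐ ω ∂P, ∀ k : ℕ,
      ¬ Summable fun p => (blockWeight p ^ (1 / (k + 1 : ℝ)) * a p) * Y p ω :=
    ae_all_iff.2 fun k => ae_not_summable_mul_of_iIndepFun hY (fun p ω => sq_nonneg _)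
      (hindep.comp _ fun _ => measurable_norm.pow_const 2) ht
      (ENNReal.toReal_pos hδ.ne' (by finiteness))
      (fun p => (congrArg ENNReal.toReal ((hYident 0 p).measure_mem_eq measurableSet_Ici)).le)
      (fun p => mul_nonneg (rpow_nonneg (zero_le_one.trans (one_le_blockWeight p)) _) (ha p))
      (haRough _ Nat.one_div_pos_of_nat)
  filter_upwards [hsummable, hrough] with ω hsum hdiv
  refine ⟨hsum, fun ε hε => not_summable_rpow_mul_of_forall_nat one_le_blockWeight
    (fun p => mul_nonneg (sq_nonneg _) (ha p)) (fun k hs => hdiv k (hs.congr fun p => ?_)) hε⟩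
  ring

/-- Non-smoothing of the randomization: if the blocks of `u₀` (with squared `L²`
norms `a (I,m) = ‖u_{I,m}‖²_{L²}`) satisfy `u₀ ∈ L²_G` (i.e. `Σ a < ∞`) but
`u₀ ∉ H^ε_G` for every `ε > 0` (i.e. `Σ (1+(2m+1)I)^ε a_{I,m} = ∞`), and the
`X_{I,m}` are iid, mean-zero, finite-variance, not a.s. zero, then almost surely
the randomization `u₀^ω` is in `L²_G` but in no `H^ε_G` with `ε > 0`. -/
theorem randomization_non_smoothing
    {Ω : Type*} [MeasurableSpace Ω] (P : Measure Ω) [IsProbabilityMeasure P]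
    (X : ℤ × ℕ → Ω → ℂ) (hmeas : ∀ p, Measurable (X p))
    (hindep : iIndepFun X P)
    (hident : ∀ p q, IdentDistrib (X p) (X q) P P)
    (hL2 : ∀ p, MemLp (X p) 2 P)
    (hmean : ∀ p, (∫ ω, X p ω ∂P) = 0)
    (hnondeg : ∀ p, P {ω | X p ω = 0} < 1)
    (a : ℤ × ℕ → ℝ) (ha : ∀ p, 0 ≤ a p)
    (haL2 : Summable a)
    (haRough : ∀ ε : ℝ, 0 < ε → ¬ Summable (fun p => blockWeight p ^ ε * a p)) :
    ∀ᵐ ω ∂P, (Summable fun p => ‖X p ω‖ ^ 2 * a p) ∧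
      ∀ ε : ℝ, 0 < ε → ¬ Summable (fun p => blockWeight p ^ ε * (‖X p ω‖ ^ 2 * a p)) :=
  randomization_non_smoothing_general P X hmeas hindep hident hL2 hnondeg a ha haL2 haRough
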